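/- Let B : H → H be a bounded linear operator on a Banach space and K_λ := id − λB. Suppose ‖K₁‖ < 1 and ‖K₂ f‖ < ‖f‖ for all f ≠ 0. Then ‖K_λ‖ < 1 for every λ ∈ (0,2). -/
import Mathlib


theorem Klam_contraction_all_lambda
    {H : Type*} [NormedAddCommGroup H] [NormedSpace ℝ H] [CompleteSpace H]
    (B : H →L[ℝ] H)
    (hK1 : ‖ContinuousLinearMap.id ℝ H - B‖ < 1)
    (hK2 : ∀ f : H, f ≠ 0 → ‖(ContinuousLinearMap.id ℝ H - (2 : ℝ) • B) f‖ < ‖f‖) :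
    ∀ lam ∈ Set.Ioo (0 : ℝ) 2, ‖ContinuousLinearMap.id ℝ H - lam • B‖ < 1 := by
  set K1 : H →L[ℝ] H := ContinuousLinearMap.id ℝ H - B with hK1def
  set K2 : H →L[ℝ] H := ContinuousLinearMap.id ℝ H - (2 : ℝ) • B with hK2def
  have hK2norm : ‖K2‖ ≤ 1 := by
    apply ContinuousLinearMap.opNorm_le_bound _ zero_le_one
    intro x
    rcases eq_or_ne x 0 with rfl | hx
    · simp
    · calc ‖K2 x‖ ≤ ‖x‖ := le_of_lt (hK2 x hx)
        _ = 1 * ‖x‖ := (one_mul _).symm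
  rintro lam ⟨h0, h2⟩
  rcases le_or_gt lam 1 with hle | hgt
  · have heq : ContinuousLinearMap.id ℝ H - lam • B = (1 - lam) • ContinuousLinearMap.id ℝ H + lam • K1 := by
      ext x
      simp only [ContinuousLinearMap.sub_apply, ContinuousLinearMap.add_apply,
        ContinuousLinearMap.smul_apply, ContinuousLinearMap.id_apply, hK1def,
        ContinuousLinearMap.sub_apply]
      module
    rw [heq]
    calc ‖(1 - lam) • ContinuousLinearMap.id ℝ H + lam • K1‖
        ≤ ‖(1 - lam) • ContinuousLinearMap.id ℝ H‖ + ‖lam • K1‖ := norm_add_le _ _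
      _ ≤ (1 - lam) * 1 + lam * ‖K1‖ := by
          have h1 := ContinuousLinearMap.opNorm_smul_le (1 - lam) (ContinuousLinearMap.id ℝ H)
          have h2' := ContinuousLinearMap.opNorm_smul_le lam K1
          have hid : ‖ContinuousLinearMap.id ℝ H‖ ≤ 1 := ContinuousLinearMap.norm_id_le
          rw [Real.norm_eq_abs, abs_of_nonneg (by linarith : (0:ℝ) ≤ 1 - lam)] at h1
          rw [Real.norm_eq_abs, abs_of_nonneg h0.le] at h2'
          nlinarith [norm_nonneg K1]
      _ < (1 - lam) * 1 + lam * 1 := by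
          have : 0 < lam := h0
          nlinarith
      _ = 1 := by ring
  · have heq : ContinuousLinearMap.id ℝ H - lam • B = (lam - 1) • K2 + (2 - lam) • K1 := by
      ext x
      simp only [ContinuousLinearMap.sub_apply, ContinuousLinearMap.add_apply,
        ContinuousLinearMap.smul_apply, ContinuousLinearMap.id_apply, hK1def, hK2def]
      module
    rw [heq]
    calc ‖(lam - 1) • K2 + (2 - lam) • K1‖
        ≤ ‖(lam - 1) • K2‖ + ‖(2 - lam) • K1‖ := norm_add_le _ _
      _ ≤ (lam - 1) * 1 + (2 - lam) * ‖K1‖ := by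
          have h1' := ContinuousLinearMap.opNorm_smul_le (lam - 1) K2
          have h2' := ContinuousLinearMap.opNorm_smul_le (2 - lam) K1
          rw [Real.norm_eq_abs, abs_of_nonneg (by linarith : (0:ℝ) ≤ lam - 1)] at h1'
          rw [Real.norm_eq_abs, abs_of_nonneg (by linarith : (0:ℝ) ≤ 2 - lam)] at h2'
          nlinarith
      _ < (lam - 1) * 1 + (2 - lam) * 1 := by nlinarith
      _ = 1 := by ring
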